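/- Let Δ₁, Δ₂ ⊂ {1,…,N}² and x, x̂ ∈ ℂ^{N×N} with ‖x̂‖_{TV} ≤ ‖x‖_{TV} where ‖·‖_{TV} = ‖D̃₁·‖₁ + ‖D̃₂·‖₁. Then, with h = x̂ − x, ‖P_{Δ₁}^⊥ D̃₁ h‖₁ + ‖P_{Δ₂}^⊥ D̃₂ h‖₁ ≤ 2(‖P_{Δ₁}^⊥ D̃₁ x‖₁ + ‖P_{Δ₂}^⊥ D̃₂ x‖₁) + |⟨P_{Δ₁} D̃₁ h, sgn(D̃₁ x)⟩| + |⟨P_{Δ₂} D̃₂ h, sgn(D̃₂ x)⟩|. -/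

import Mathlib

open Finset

/-- Circular finite differences along the first (column) index. -/
def D1 (N : ℕ) [NeZero N] (z : Fin N → Fin N → ℂ) : Fin N → Fin N → ℂ :=
  fun k j => z k j - z (k - 1) j

/-- Circular finite differences along the second (row) index. -/
def D2 (N : ℕ) [NeZero N] (z : Fin N → Fin N → ℂ) : Fin N → Fin N → ℂ :=
  fun k j => z k j - z k (j - 1)

/-- Entrywise sign: `sgn z = z / |z|` for `z ≠ 0` and `sgn 0 = 0`. -/
noncomputable def csgn (z : ℂ) : ℂ := if z = 0 then 0 else z / Norm.norm z

lemma csgn_pointwise (a h : ℂ) :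
    Norm.norm a + (h * starRingEnd ℂ (csgn a)).re ≤ Norm.norm (a + h) := by
  by_cases ha : a = 0
  · simp [ha, csgn]
  · have hw : Norm.norm (csgn a) = 1 := by
      simp [csgn, ha, norm_div, Complex.norm_real, abs_of_nonneg (norm_nonneg a),
        div_self (norm_ne_zero_iff.mpr ha)]
    have h2 : (a * starRingEnd ℂ (csgn a)).re = Norm.norm a := by
      have : a * starRingEnd ℂ (csgn a) = (Norm.norm a : ℂ) := by
        rw [csgn, if_neg ha, map_div₀, Complex.conj_ofReal, ← mul_div_assoc,
          Complex.mul_conj, ← Complex.sq_norm]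
        rw [sq]; push_cast; rw [mul_div_assoc, div_self (by exact_mod_cast norm_ne_zero_iff.mpr ha), mul_one]
      rw [this]; simp
    have h1 : ((a + h) * starRingEnd ℂ (csgn a)).re ≤ Norm.norm (a + h) := by
      calc ((a + h) * starRingEnd ℂ (csgn a)).re
          ≤ Norm.norm ((a + h) * starRingEnd ℂ (csgn a)) := Complex.re_le_norm _
        _ = Norm.norm (a + h) := by rw [norm_mul, Complex.norm_conj, hw, mul_one]
    have := h1
    rw [add_mul, Complex.add_re, h2] at this
    linarith

lemma cone_one {ι : Type*} [Fintype ι] [DecidableEq ι] (a h : ι → ℂ) (Δ : Finset ι) :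
    ∑ p ∈ Δᶜ, Norm.norm (h p)
      ≤ (∑ p, Norm.norm (a p + h p)) - (∑ p, Norm.norm (a p))
        + 2 * ∑ p ∈ Δᶜ, Norm.norm (a p)
        + Norm.norm (∑ p ∈ Δ, h p * starRingEnd ℂ (csgn (a p))) := by
  have hs1 : ∑ p ∈ Δ, Norm.norm (a p + h p) + ∑ p ∈ Δᶜ, Norm.norm (a p + h p)
      = ∑ p, Norm.norm (a p + h p) := Finset.sum_add_sum_compl Δ _
  have hs2 : ∑ p ∈ Δ, Norm.norm (a p) + ∑ p ∈ Δᶜ, Norm.norm (a p)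
      = ∑ p, Norm.norm (a p) := Finset.sum_add_sum_compl Δ _
  have hΔ : ∑ p ∈ Δ, Norm.norm (a p) + (∑ p ∈ Δ, h p * starRingEnd ℂ (csgn (a p))).re
      ≤ ∑ p ∈ Δ, Norm.norm (a p + h p) := by
    rw [Complex.re_sum, ← Finset.sum_add_distrib]
    exact Finset.sum_le_sum fun p _ => csgn_pointwise (a p) (h p)
  have hΔc : ∑ p ∈ Δᶜ, Norm.norm (h p) - ∑ p ∈ Δᶜ, Norm.norm (a p)
      ≤ ∑ p ∈ Δᶜ, Norm.norm (a p + h p) := by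
    rw [← Finset.sum_sub_distrib]
    refine Finset.sum_le_sum fun p _ => ?_
    have h1 : Norm.norm (h p) ≤ Norm.norm (a p + h p) + Norm.norm (a p) := by
      have h2 := norm_add_le (a p + h p) (-(a p))
      simp only [norm_neg] at h2
      calc Norm.norm (h p) = Norm.norm (a p + h p + -(a p)) := by ring_nf
        _ ≤ _ := h2
    linarith
  have hre : -Norm.norm (∑ p ∈ Δ, h p * starRingEnd ℂ (csgn (a p)))
      ≤ (∑ p ∈ Δ, h p * starRingEnd ℂ (csgn (a p))).re :=
    le_trans (neg_le_neg (Complex.abs_re_le_norm _)) (neg_abs_le _)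
  linarith

/-- Combined cone inequality for both difference directions under TV minimality. -/
theorem tv_cone_inequality_both (N : ℕ) [NeZero N] (x xhat : Fin N → Fin N → ℂ)
    (Δ₁ Δ₂ : Finset (Fin N × Fin N))
    (hmin : (∑ k, ∑ j, Norm.norm (D1 N xhat k j)) + (∑ k, ∑ j, Norm.norm (D2 N xhat k j))
      ≤ (∑ k, ∑ j, Norm.norm (D1 N x k j)) + (∑ k, ∑ j, Norm.norm (D2 N x k j))) :
    (∑ p ∈ Δ₁ᶜ, Norm.norm (D1 N (xhat - x) p.1 p.2))
        + (∑ p ∈ Δ₂ᶜ, Norm.norm (D2 N (xhat - x) p.1 p.2))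
      ≤ 2 * ((∑ p ∈ Δ₁ᶜ, Norm.norm (D1 N x p.1 p.2))
              + (∑ p ∈ Δ₂ᶜ, Norm.norm (D2 N x p.1 p.2)))
        + Norm.norm (∑ p ∈ Δ₁,
            D1 N (xhat - x) p.1 p.2 * starRingEnd ℂ (csgn (D1 N x p.1 p.2)))
        + Norm.norm (∑ p ∈ Δ₂,
            D2 N (xhat - x) p.1 p.2 * starRingEnd ℂ (csgn (D2 N x p.1 p.2))) := by
  have e1 : ∀ k j : Fin N, D1 N x k j + D1 N (xhat - x) k j = D1 N xhat k j := by
    intro k j; simp only [D1, Pi.sub_apply]; ring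
  have e2 : ∀ k j : Fin N, D2 N x k j + D2 N (xhat - x) k j = D2 N xhat k j := by
    intro k j; simp only [D2, Pi.sub_apply]; ring
  have c1 := cone_one (fun p : Fin N × Fin N => D1 N x p.1 p.2)
    (fun p => D1 N (xhat - x) p.1 p.2) Δ₁
  have c2 := cone_one (fun p : Fin N × Fin N => D2 N x p.1 p.2)
    (fun p => D2 N (xhat - x) p.1 p.2) Δ₂
  simp only [e1, e2] at c1 c2
  have t1 : ∑ p : Fin N × Fin N, Norm.norm (D1 N xhat p.1 p.2)
      = ∑ k, ∑ j, Norm.norm (D1 N xhat k j) :=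
    Fintype.sum_prod_type' (fun k j => Norm.norm (D1 N xhat k j))
  have t2 : ∑ p : Fin N × Fin N, Norm.norm (D2 N xhat p.1 p.2)
      = ∑ k, ∑ j, Norm.norm (D2 N xhat k j) :=
    Fintype.sum_prod_type' (fun k j => Norm.norm (D2 N xhat k j))
  have t3 : ∑ p : Fin N × Fin N, Norm.norm (D1 N x p.1 p.2)
      = ∑ k, ∑ j, Norm.norm (D1 N x k j) :=
    Fintype.sum_prod_type' (fun k j => Norm.norm (D1 N x k j))
  have t4 : ∑ p : Fin N × Fin N, Norm.norm (D2 N x p.1 p.2)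
      = ∑ k, ∑ j, Norm.norm (D2 N x k j) :=
    Fintype.sum_prod_type' (fun k j => Norm.norm (D2 N x k j))
  rw [t1, t3] at c1
  rw [t2, t4] at c2
  linarith
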